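/- Contraction bound: under the setting of the uniqueness theorem for the Stieltjes kernel, for any z = w + iv ∈ ℂ⁺, and with β_j(z,ν) = (1 + c cos(τν) K_j(z,ν))^{-1} and U_j(z,λ) = (2π)^{-1}∫₀^{2π} β_j(z,ν) cos(τν) h(λ,ν) dν, the product |β₁(z,ν) β₂(z,ν)| / (|U₁(z,λ) − z| · |U₂(z,λ) − z|) is bounded by C(v) = max{64 c² λ̄⁴ v^{-4}, 4 v^{-2}}. -/

import Mathlib

open Complex MeasureTheory Real Set

/-- `K` is, for each fixed `ν ∈ [0,2π]`, the Stieltjes transform of a positive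
measure with mass at most `λ̄²`, and is continuous in `ν`. -/
def IsStieltjesKernelMass (lamBar : ℝ) (K : ℂ → ℝ → ℂ) : Prop :=
  (∀ z : ℂ, 0 < z.im → ContinuousOn (fun ν => K z ν) (Icc (0:ℝ) (2 * π))) ∧
  (∀ ν ∈ Icc (0:ℝ) (2 * π), ∃ μ : Measure ℝ, IsFiniteMeasure μ ∧
    μ Set.univ ≤ ENNReal.ofReal (lamBar ^ 2) ∧
    ∀ z : ℂ, 0 < z.im → K z ν = ∫ σ : ℝ, ((σ : ℂ) - z)⁻¹ ∂μ)

/-!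
Write `v = Im z`. A Stieltjes transform `K = ∫ (σ - z)⁻¹ dμ` has `Im K = v ∫ |σ - z|⁻² dμ ≥ 0`,
so Cauchy–Schwarz gives `v |K|² ≤ μ(ℝ) Im K ≤ λ̄² Im K`. If `|c cos(τν) K| ≤ 1/2` then `|β| ≤ 2`;
otherwise `|β⁻¹| ≥ |Im β⁻¹| = c |cos(τν)| Im K ≥ v / (4 c λ̄²)`. In `U`, the integrand
`β cos(τν) h` has imaginary part `-c cos²(τν) h Im K |β|² ≤ 0`, so `Im U ≤ 0` and `|U - z| ≥ v`.
-/

section CauchySchwarz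

variable {α : Type*} [MeasurableSpace α] {μ : Measure α} [IsFiniteMeasure μ]

theorem sq_integral_le_measureReal_univ_mul_integral_sq {f : α → ℝ} (hf : Integrable f μ)
    (hf2 : Integrable (fun x => f x ^ 2) μ) :
    (∫ x, f x ∂μ) ^ 2 ≤ μ.real univ * ∫ x, f x ^ 2 ∂μ := by
  set m := μ.real univ
  set A := ∫ x, f x ∂μ
  set Q := ∫ x, f x ^ 2 ∂μ
  have hexpand : ∫ x, (m * f x - A) ^ 2 ∂μ = m * (m * Q - A ^ 2) := by
    have hsq : ∀ x, (m * f x - A) ^ 2 = m ^ 2 * f x ^ 2 - 2 * m * A * f x + A ^ 2 := fun x => by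
      ring
    simp_rw [hsq]
    rw [integral_add (f := fun x => m ^ 2 * f x ^ 2 - 2 * m * A * f x)
        ((hf2.const_mul _).sub (hf.const_mul _)) (integrable_const _),
      integral_sub (hf2.const_mul _) (hf.const_mul _), integral_const_mul, integral_const_mul,
      integral_const, smul_eq_mul]
    ring
  have hnonneg : 0 ≤ m * (m * Q - A ^ 2) := hexpand ▸ integral_nonneg fun x => sq_nonneg _
  rcases measureReal_nonneg.lt_or_eq with hm | hm
  · nlinarith
  · obtain rfl : μ = 0 := by
      rwa [eq_comm, measureReal_def, ENNReal.toReal_eq_zero_iff, or_iff_left (measure_ne_top _ _),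
        Measure.measure_univ_eq_zero] at hm
    simp [m, A]

end CauchySchwarz

theorem Complex.im_le_norm_sub_of_im_nonpos {u z : ℂ} (hu : u.im ≤ 0) : z.im ≤ ‖u - z‖ :=
  calc z.im ≤ -(u - z).im := by rw [sub_im]; linarith
    _ ≤ ‖u - z‖ := (neg_le_abs _).trans (abs_im_le_norm _)

theorem Complex.im_inv_mul_ofReal_nonpos {w : ℂ} {b : ℝ} (h : 0 ≤ b * w.im) :
    (w⁻¹ * b).im ≤ 0 := by
  rw [mul_comm, im_ofReal_mul, inv_im, mul_div_assoc', mul_neg, neg_div, neg_nonpos]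
  exact div_nonneg h (normSq_nonneg w)

theorem im_intervalIntegral_nonpos {f : ℝ → ℂ} {a b : ℝ} (hab : a ≤ b)
    (hf : ∀ x ∈ Icc a b, (f x).im ≤ 0) : (∫ x in a..b, f x).im ≤ 0 := by
  by_cases hfi : IntervalIntegrable f volume a b
  · have hneg := intervalIntegral.integral_nonneg (μ := volume) hab fun x hx =>
      neg_nonneg.2 (hf x hx)
    rw [intervalIntegral.integral_neg] at hneg
    exact (intervalIntegral.intervalIntegral_im hfi).symm.trans_le (neg_nonneg.1 hneg)
  · simp [intervalIntegral.integral_undef hfi]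

theorem Complex.norm_inv_one_add_mul_le {a c M v : ℝ} {w : ℂ} (hv : 0 < v) (ha : |a| ≤ c)
    (hw : 0 ≤ w.im) (hwM : v * ‖w‖ ^ 2 ≤ M * w.im) :
    ‖(1 + (a : ℂ) * w)⁻¹‖ ≤ max 2 (4 * c * M / v) := by
  set D := 1 + (a : ℂ) * w
  have hnorm_aw : ‖(a : ℂ) * w‖ = |a| * ‖w‖ := by rw [norm_mul, norm_real, Real.norm_eq_abs]
  rw [norm_inv]
  by_cases hsmall : |a| * ‖w‖ ≤ 1 / 2
  · have hD : 2⁻¹ ≤ ‖D‖ := by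
      have := norm_sub_le_norm_add (1 : ℂ) ((a : ℂ) * w)
      rw [norm_one, hnorm_aw] at this
      linarith
    exact (inv_le_of_inv_le₀ two_pos hD).trans (le_max_left _ _)
  · push Not at hsmall
    have hImD : |a| * w.im ≤ ‖D‖ := by
      have := abs_im_le_norm D
      rwa [show D.im = a * w.im by simp [D], abs_mul, abs_of_nonneg hw] at this
    have hquarter : 1 / 4 < (|a| * ‖w‖) ^ 2 := by nlinarith
    have hv_lt : v < 4 * |a| ^ 2 * (M * w.im) :=
      calc v < 4 * v * (|a| * ‖w‖) ^ 2 := by nlinarith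
        _ = 4 * |a| ^ 2 * (v * ‖w‖ ^ 2) := by ring
        _ ≤ 4 * |a| ^ 2 * (M * w.im) := by gcongr
    have hM : 0 ≤ M := by
      by_contra! hM
      have := mul_nonpos_of_nonneg_of_nonpos (by positivity : (0 : ℝ) ≤ 4 * |a| ^ 2)
        (mul_nonpos_of_nonpos_of_nonneg hM.le hw)
      linarith
    have hcM : 0 ≤ 4 * c * M := mul_nonneg (by linarith [abs_nonneg a]) hM
    have key : v < 4 * c * M * ‖D‖ :=
      calc v < 4 * |a| ^ 2 * (M * w.im) := hv_lt
        _ = 4 * |a| * M * (|a| * w.im) := by ring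
        _ ≤ 4 * c * M * ‖D‖ := mul_le_mul (by gcongr) hImD (mul_nonneg (abs_nonneg a) hw) hcM
    have hD : 0 < ‖D‖ := pos_of_mul_pos_right (hv.trans key) hcM
    refine le_trans ?_ (le_max_right _ _)
    rw [le_div_iff₀ hv, inv_mul_le_iff₀ hD]
    linarith

section Stieltjes

variable {μ : Measure ℝ} [IsFiniteMeasure μ] {z : ℂ}

theorem im_le_norm_ofReal_sub (σ : ℝ) : z.im ≤ ‖(σ : ℂ) - z‖ :=
  Complex.im_le_norm_sub_of_im_nonpos (by simp)

theorem norm_inv_ofReal_sub_le (hz : 0 < z.im) (σ : ℝ) : ‖((σ : ℂ) - z)⁻¹‖ ≤ z.im⁻¹ := by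
  rw [norm_inv]
  exact inv_anti₀ hz (im_le_norm_ofReal_sub σ)

theorem integrable_inv_ofReal_sub (hz : 0 < z.im) :
    Integrable (fun σ : ℝ => ((σ : ℂ) - z)⁻¹) μ := by
  have hne (σ : ℝ) : (σ : ℂ) - z ≠ 0 :=
    norm_pos_iff.1 (hz.trans_le (im_le_norm_ofReal_sub σ))
  exact .of_bound ((continuous_ofReal.sub continuous_const).inv₀ hne).aestronglyMeasurable _
    (ae_of_all _ (norm_inv_ofReal_sub_le hz))

theorem im_inv_ofReal_sub (σ : ℝ) :
    ((σ : ℂ) - z)⁻¹.im = z.im * ‖((σ : ℂ) - z)⁻¹‖ ^ 2 := by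
  rw [inv_im, norm_inv, inv_pow, Complex.sq_norm]
  simp only [sub_im, ofReal_im]
  ring

theorem im_integral_inv_ofReal_sub (hz : 0 < z.im) :
    (∫ σ, ((σ : ℂ) - z)⁻¹ ∂μ).im = z.im * ∫ σ, ‖((σ : ℂ) - z)⁻¹‖ ^ 2 ∂μ := by
  rw [← integral_const_mul]
  exact (integral_im (integrable_inv_ofReal_sub hz)).symm.trans
    (integral_congr_ae (ae_of_all _ im_inv_ofReal_sub))

theorem im_integral_inv_ofReal_sub_nonneg (hz : 0 < z.im) :
    0 ≤ (∫ σ, ((σ : ℂ) - z)⁻¹ ∂μ).im := by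
  rw [im_integral_inv_ofReal_sub hz]
  exact mul_nonneg hz.le (integral_nonneg fun σ => sq_nonneg _)

theorem im_mul_norm_integral_inv_ofReal_sub_sq_le (hz : 0 < z.im) :
    z.im * ‖∫ σ, ((σ : ℂ) - z)⁻¹ ∂μ‖ ^ 2 ≤ μ.real univ * (∫ σ, ((σ : ℂ) - z)⁻¹ ∂μ).im := by
  set g := fun σ : ℝ => ((σ : ℂ) - z)⁻¹
  have hg : Integrable g μ := integrable_inv_ofReal_sub hz
  have hg2 : Integrable (fun σ => ‖g σ‖ ^ 2) μ :=
    .of_bound (hg.norm.aestronglyMeasurable.pow 2) (z.im⁻¹ ^ 2) (ae_of_all _ fun σ => by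
      rw [norm_pow, norm_norm]
      exact pow_le_pow_left₀ (norm_nonneg _) (norm_inv_ofReal_sub_le hz σ) 2)
  have hsq : ‖∫ σ, g σ ∂μ‖ ^ 2 ≤ μ.real univ * ∫ σ, ‖g σ‖ ^ 2 ∂μ :=
    (pow_le_pow_left₀ (norm_nonneg _) (norm_integral_le_integral_norm g) 2).trans
      (sq_integral_le_measureReal_univ_mul_integral_sq hg.norm hg2)
  rw [im_integral_inv_ofReal_sub hz]
  calc z.im * ‖∫ σ, g σ ∂μ‖ ^ 2 ≤ z.im * (μ.real univ * ∫ σ, ‖g σ‖ ^ 2 ∂μ) := by gcongr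
    _ = μ.real univ * (z.im * ∫ σ, ‖g σ‖ ^ 2 ∂μ) := by ring

end Stieltjes

namespace IsStieltjesKernelMass

variable {lamBar : ℝ} {K : ℂ → ℝ → ℂ} {z : ℂ} {ν : ℝ}

theorem im_nonneg (hK : IsStieltjesKernelMass lamBar K) (hz : 0 < z.im)
    (hν : ν ∈ Icc 0 (2 * π)) : 0 ≤ (K z ν).im := by
  obtain ⟨μ, _, -, hrep⟩ := hK.2 ν hν
  rw [hrep z hz]
  exact im_integral_inv_ofReal_sub_nonneg hz

theorem im_mul_norm_sq_le (hK : IsStieltjesKernelMass lamBar K) (hz : 0 < z.im)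
    (hν : ν ∈ Icc 0 (2 * π)) : z.im * ‖K z ν‖ ^ 2 ≤ lamBar ^ 2 * (K z ν).im := by
  obtain ⟨μ, _, hmass, hrep⟩ := hK.2 ν hν
  rw [hrep z hz]
  refine (im_mul_norm_integral_inv_ofReal_sub_sq_le hz).trans
    (mul_le_mul_of_nonneg_right ?_ (im_integral_inv_ofReal_sub_nonneg hz))
  exact ENNReal.toReal_le_of_le_ofReal (sq_nonneg _) hmass

end IsStieltjesKernelMass

/-- `betaFactor` and `betaAverage` are the paper's `β(z, ν)` and `U(z, λ)`, with `g = h λ`. -/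
noncomputable def betaFactor (c : ℝ) (τ : ℕ) (K : ℂ → ℝ → ℂ) (z : ℂ) (ν : ℝ) : ℂ :=
  (1 + (c : ℂ) * ((Real.cos (τ * ν) : ℝ) : ℂ) * K z ν)⁻¹

noncomputable def betaAverage (c : ℝ) (τ : ℕ) (K : ℂ → ℝ → ℂ) (g : ℝ → ℝ) (z : ℂ) : ℂ :=
  ((2 * π : ℝ) : ℂ)⁻¹ *
    ∫ ν in (0:ℝ)..(2 * π), betaFactor c τ K z ν * ((Real.cos (τ * ν) * g ν : ℝ) : ℂ)

section BetaFactor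

variable {c lamBar : ℝ} {τ : ℕ} {K : ℂ → ℝ → ℂ} {z : ℂ}

theorem ofReal_mul_ofReal_cos (ν : ℝ) :
    (c : ℂ) * ((Real.cos (τ * ν) : ℝ) : ℂ) = ((c * Real.cos (τ * ν) : ℝ) : ℂ) := by
  push_cast
  ring

theorem norm_betaFactor_le (hc : 0 ≤ c) (hK : IsStieltjesKernelMass lamBar K) (hz : 0 < z.im)
    {ν : ℝ} (hν : ν ∈ Icc 0 (2 * π)) :
    ‖betaFactor c τ K z ν‖ ≤ max 2 (4 * c * lamBar ^ 2 / z.im) := by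
  rw [betaFactor, ofReal_mul_ofReal_cos]
  refine Complex.norm_inv_one_add_mul_le hz ?_ (hK.im_nonneg hz hν) (hK.im_mul_norm_sq_le hz hν)
  rw [abs_mul, abs_of_nonneg hc]
  exact mul_le_of_le_one_right hc (abs_cos_le_one _)

theorem im_betaFactor_mul_cos_mul_nonpos (hc : 0 ≤ c) (hK : IsStieltjesKernelMass lamBar K)
    (hz : 0 < z.im) {ν t : ℝ} (hν : ν ∈ Icc 0 (2 * π)) (ht : 0 ≤ t) :
    (betaFactor c τ K z ν * ((Real.cos (τ * ν) * t : ℝ) : ℂ)).im ≤ 0 := by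
  rw [betaFactor, ofReal_mul_ofReal_cos]
  refine Complex.im_inv_mul_ofReal_nonpos ?_
  rw [add_im, one_im, im_ofReal_mul, zero_add]
  calc (0 : ℝ) ≤ c * Real.cos (τ * ν) ^ 2 * (t * (K z ν).im) :=
        mul_nonneg (mul_nonneg hc (sq_nonneg _)) (mul_nonneg ht (hK.im_nonneg hz hν))
    _ = Real.cos (τ * ν) * t * (c * Real.cos (τ * ν) * (K z ν).im) := by ring

theorem im_le_norm_betaAverage_sub (hc : 0 ≤ c) (hK : IsStieltjesKernelMass lamBar K)
    (hz : 0 < z.im) {g : ℝ → ℝ} (hg : ∀ ν ∈ Icc 0 (2 * π), 0 ≤ g ν) :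
    z.im ≤ ‖betaAverage c τ K g z - z‖ := by
  refine Complex.im_le_norm_sub_of_im_nonpos ?_
  rw [betaAverage, ← ofReal_inv, im_ofReal_mul]
  exact mul_nonpos_of_nonneg_of_nonpos (by positivity) (im_intervalIntegral_nonpos
    (by positivity) fun ν hν => im_betaFactor_mul_cos_mul_nonpos hc hK hz hν (hg ν hν))

end BetaFactor

theorem max_two_mul_self_div_le (x v : ℝ) :
    max 2 x * max 2 x / (v * v) ≤ max (x ^ 2 / v ^ 2) (4 / v ^ 2) := by
  rcases max_cases 2 x with ⟨hmax, -⟩ | ⟨hmax, -⟩ <;> rw [hmax]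
  · exact (le_max_right _ _).trans_eq' (by ring)
  · exact (le_max_left _ _).trans_eq' (by ring)

theorem stieltjes_kernel_contraction_bound_general
    (m τ : ℕ) (c lamBar : ℝ) (hc : 0 < c)
    (h : (Fin m → ℝ) → ℝ → ℝ)
    (hrange : ∀ lam : Fin m → ℝ, ∀ ν ∈ Icc (0:ℝ) (2 * π),
      h lam ν ∈ Icc (0:ℝ) (lamBar ^ 2))
    (K₁ K₂ : ℂ → ℝ → ℂ)
    (h₁ : IsStieltjesKernelMass lamBar K₁) (h₂ : IsStieltjesKernelMass lamBar K₂)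
    (z : ℂ) (hz : 0 < z.im) (ν : ℝ) (hν : ν ∈ Icc (0:ℝ) (2 * π))
    (lam : Fin m → ℝ) :
    ‖((1 + (c : ℂ) * ((Real.cos (τ * ν) : ℝ) : ℂ) * K₁ z ν)⁻¹ *
        (1 + (c : ℂ) * ((Real.cos (τ * ν) : ℝ) : ℂ) * K₂ z ν)⁻¹)‖ /
      (‖((((2 * π : ℝ) : ℂ)⁻¹ *
          ∫ ν' in (0:ℝ)..(2 * π),
            (1 + (c : ℂ) * ((Real.cos (τ * ν') : ℝ) : ℂ) * K₁ z ν')⁻¹ *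
              ((Real.cos (τ * ν') * h lam ν' : ℝ) : ℂ)) - z)‖ *
        ‖((((2 * π : ℝ) : ℂ)⁻¹ *
          ∫ ν' in (0:ℝ)..(2 * π),
            (1 + (c : ℂ) * ((Real.cos (τ * ν') : ℝ) : ℂ) * K₂ z ν')⁻¹ *
              ((Real.cos (τ * ν') * h lam ν' : ℝ) : ℂ)) - z)‖)
      ≤ max (64 * c ^ 2 * lamBar ^ 4 / z.im ^ 4) (4 / z.im ^ 2) := by
  show ‖betaFactor c τ K₁ z ν * betaFactor c τ K₂ z ν‖ /
      (‖betaAverage c τ K₁ (h lam) z - z‖ * ‖betaAverage c τ K₂ (h lam) z - z‖) ≤ _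
  have hh : ∀ ν ∈ Icc 0 (2 * π), 0 ≤ h lam ν := fun ν hν => (hrange lam ν hν).1
  have hB : 0 ≤ max 2 (4 * c * lamBar ^ 2 / z.im) := le_max_of_le_left zero_le_two
  calc _ ≤ max 2 (4 * c * lamBar ^ 2 / z.im) * max 2 (4 * c * lamBar ^ 2 / z.im) /
        (z.im * z.im) := by
        rw [norm_mul]
        exact div_le_div₀ (mul_nonneg hB hB)
          (mul_le_mul (norm_betaFactor_le hc.le h₁ hz hν) (norm_betaFactor_le hc.le h₂ hz hν)
            (norm_nonneg _) hB) (by positivity)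
          (mul_le_mul (im_le_norm_betaAverage_sub hc.le h₁ hz hh)
            (im_le_norm_betaAverage_sub hc.le h₂ hz hh) hz.le (norm_nonneg _))
    _ ≤ max ((4 * c * lamBar ^ 2 / z.im) ^ 2 / z.im ^ 2) (4 / z.im ^ 2) :=
        max_two_mul_self_div_le _ _
    _ ≤ max (64 * c ^ 2 * lamBar ^ 4 / z.im ^ 4) (4 / z.im ^ 2) := by
        refine max_le_max ?_ le_rfl
        rw [show (4 * c * lamBar ^ 2 / z.im) ^ 2 / z.im ^ 2 = 16 * c ^ 2 * lamBar ^ 4 / z.im ^ 4 by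
          ring]
        gcongr
        norm_num

/-- Contraction bound used in the uniqueness proof for the Stieltjes kernel:
with `β_j(z,ν) = (1 + c cos(τν) K_j(z,ν))⁻¹` and
`U_j(z,λ) = (2π)⁻¹ ∫₀^{2π} β_j(z,ν) cos(τν) h(λ,ν) dν`, the quantity
`|β₁(z,ν) β₂(z,ν)| / (|U₁(z,λ) − z| |U₂(z,λ) − z|)` is bounded by
`C(v) = max{64 c² λ̄⁴ v⁻⁴, 4 v⁻²}`, where `v = Im z`. -/
theorem stieltjes_kernel_contraction_bound
    (m τ : ℕ) (c lamBar : ℝ) (hc : 0 < c) (hlam : 0 ≤ lamBar)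
    (h : (Fin m → ℝ) → ℝ → ℝ)
    (hrange : ∀ lam : Fin m → ℝ, ∀ ν ∈ Icc (0:ℝ) (2 * π),
      h lam ν ∈ Icc (0:ℝ) (lamBar ^ 2))
    (K₁ K₂ : ℂ → ℝ → ℂ)
    (h₁ : IsStieltjesKernelMass lamBar K₁) (h₂ : IsStieltjesKernelMass lamBar K₂)
    (z : ℂ) (hz : 0 < z.im) (ν : ℝ) (hν : ν ∈ Icc (0:ℝ) (2 * π))
    (lam : Fin m → ℝ) :
    ‖((1 + (c : ℂ) * ((Real.cos (τ * ν) : ℝ) : ℂ) * K₁ z ν)⁻¹ *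
        (1 + (c : ℂ) * ((Real.cos (τ * ν) : ℝ) : ℂ) * K₂ z ν)⁻¹)‖ /
      (‖((((2 * π : ℝ) : ℂ)⁻¹ *
          ∫ ν' in (0:ℝ)..(2 * π),
            (1 + (c : ℂ) * ((Real.cos (τ * ν') : ℝ) : ℂ) * K₁ z ν')⁻¹ *
              ((Real.cos (τ * ν') * h lam ν' : ℝ) : ℂ)) - z)‖ *
        ‖((((2 * π : ℝ) : ℂ)⁻¹ *
          ∫ ν' in (0:ℝ)..(2 * π),
            (1 + (c : ℂ) * ((Real.cos (τ * ν') : ℝ) : ℂ) * K₂ z ν')⁻¹ *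
              ((Real.cos (τ * ν') * h lam ν' : ℝ) : ℂ)) - z)‖)
      ≤ max (64 * c ^ 2 * lamBar ^ 4 / z.im ^ 4) (4 / z.im ^ 2) :=
  stieltjes_kernel_contraction_bound_general m τ c lamBar hc h hrange K₁ K₂ h₁ h₂ z hz ν hν lam
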